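/- Let b ∈ {3, 4, 5} and let a be an integer with gcd(a, b) = 1, a ≠ 0, and a ≠ 1. Let S₁ ⊆ ℚ × ℚ be as in the Hoste–Shanahan table for the Whitehead link: the union of {(0,0), (-4,-2), (-2,-4)}, {(2/t, 2t) : t > 0}, {(-2/t - 2, -2t) : 0 < t ≤ 1}, {(-2/t, -2 - 2t) : t ≥ 1}, and {(-3 + s, -3 - s) : -1 ≤ s ≤ 1}. Then there is no y ∈ ℚ with (1, y) ∈ S₁ and y = 6 - b/a. -/

import Mathlib

/-! The only point of the Whitehead-link table `S₁` with first coordinate `1` is `(1, 4)`, coming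
from the branch `(2/t, 2t)` at `t = 2`. So `6 - b/a = 4`, i.e. `b = 2a`; then `gcd(a, b) = |a| = 1`
forces `b = ±2`, which is not in `{3, 4, 5}`. -/

def S₁ : Set (ℚ × ℚ) :=
  ({((0 : ℚ), (0 : ℚ)), (-4, -2), (-2, -4)} : Set (ℚ × ℚ)) ∪
  {p | ∃ t : ℚ, 0 < t ∧ p = (2 / t, 2 * t)} ∪
  {p | ∃ t : ℚ, 0 < t ∧ t ≤ 1 ∧ p = (-2 / t - 2, -2 * t)} ∪
  {p | ∃ t : ℚ, 1 ≤ t ∧ p = (-2 / t, -2 - 2 * t)} ∪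
  {p | ∃ s : ℚ, -1 ≤ s ∧ s ≤ 1 ∧ p = (-3 + s, -3 - s)}

theorem mk_one_mem_S₁_iff (y : ℚ) : ((1 : ℚ), y) ∈ S₁ ↔ y = 4 := by
  constructor
  · rintro (((((h | h | h) | ⟨t, ht, h⟩) | ⟨t, ht, _, h⟩) | ⟨t, ht, h⟩) | ⟨s, _, hs, h⟩)
    all_goals simp only [Set.mem_singleton_iff, Prod.mk.injEq] at h
    · norm_num at h
    · norm_num at h
    · norm_num at h
    · obtain ⟨hx, rfl⟩ := h
      have : t = 2 := by field_simp at hx; linarith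
      rw [this]; norm_num
    · have : -2 / t < 0 := div_neg_of_neg_of_pos (by norm_num) ht
      linarith [h.1]
    · have : -2 / t < 0 := div_neg_of_neg_of_pos (by norm_num) (by linarith)
      linarith [h.1]
    · linarith [h.1]
  · rintro rfl
    exact Or.inl (Or.inl (Or.inl (Or.inr ⟨2, by norm_num, by norm_num⟩)))

theorem eq_two_mul_of_six_sub_div_eq_four {a b : ℤ} (ha : a ≠ 0) (h : 6 - (b : ℚ) / a = 4) :
    b = 2 * a := by
  have haq : (a : ℚ) ≠ 0 := Int.cast_ne_zero.mpr ha
  have : (b : ℚ) = 2 * a := by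
    rw [← div_eq_iff haq]
    linarith
  exact_mod_cast this

theorem stmt_12_general (b a : ℤ) (hb : b ∈ ({3, 4, 5} : Set ℤ)) (ha : a ≠ 0)
    (hgcd : Int.gcd a b = 1) :
    ¬ ∃ y : ℚ, (1, y) ∈ S₁ ∧ y = 6 - (b : ℚ) / a := by
  rintro ⟨y, hy, hval⟩
  rw [mk_one_mem_S₁_iff] at hy
  have hba : b = 2 * a := eq_two_mul_of_six_sub_div_eq_four ha (hval ▸ hy)
  rw [hba, Int.gcd_mul_left_right] at hgcd
  simp only [Set.mem_insert_iff, Set.mem_singleton_iff] at hb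
  omega

theorem stmt_12 (b a : ℤ) (hb : b ∈ ({3, 4, 5} : Set ℤ)) (ha : a ≠ 0) (ha1 : a ≠ 1)
    (hgcd : Int.gcd a b = 1) :
    ¬ ∃ y : ℚ, (1, y) ∈ S₁ ∧ y = 6 - (b : ℚ) / a :=
  stmt_12_general b a hb ha hgcd
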